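/- Let R be a Dedekind domain and H a Hopf algebra over R which is projective as an R-module. For f ∈ H* := Hom_R(H, R) let T_f : H → H be the R-linear map h ↦ ∑ h₁ f(h₂). Then the set Rat(H*) := {f ∈ H* : the image of T_f is a finitely generated R-submodule of H} is an R-submodule of H* which is flat as an R-module and is saturated in H*: if r ∈ R is non-zero and f ∈ H* satisfies r·f ∈ Rat(H*), then f ∈ Rat(H*). -/

import Mathlib

open TensorProduct

section Rat

variable (R H : Type*) [CommRing R] [Ring H] [HopfAlgebra R H]

/-- For `f ∈ H* = Hom_R(H, R)`, the `R`-linear map `T_f : H → H`,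
`h ↦ ∑ h₁ f(h₂)` (Sweedler notation). -/
noncomputable def ratEndo (f : H →ₗ[R] R) : H →ₗ[R] H :=
  (TensorProduct.rid R H).toLinearMap ∘ₗ LinearMap.lTensor H f ∘ₗ
    (Coalgebra.comul : H →ₗ[R] H ⊗[R] H)

end Rat

/-!
Rat(H*) is the preimage of the submodule of finite-range endomorphisms of `H` under the linear
map `f ↦ T_f`, hence a submodule. It is saturated because `T_{r f} = r • T_f` and multiplication
by `r ≠ 0` is injective on the projective, hence torsion-free, module `H`; and it is flat because
it sits inside the torsion-free module `H*`, and torsion-free modules over a Dedekind domain are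
flat.
-/

theorem LinearMap.HasFiniteRange.of_smul {K V W : Type*} [CommRing K] [AddCommGroup V]
    [Module K V] [AddCommGroup W] [Module K W] {f : V →ₗ[K] W} {c : K}
    (hc : IsSMulRegular W c) (h : (c • f).HasFiniteRange) : f.HasFiniteRange := by
  have hrange : range (c • f) = (range f).map (lsmul K W c) := by
    rw [← range_comp]
    rfl
  rw [hasFiniteRange_iff_range, hrange] at h
  exact Submodule.fg_of_fg_map_injective (lsmul K W c) hc h

-- Instance search fails to find this for submodules of `M = H →ₗ[R] R`.
theorem Submodule.flat_of_isTorsionFree {R M : Type*} [CommRing R] [IsDedekindDomain R]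
    [AddCommGroup M] [Module R M] [Module.IsTorsionFree R M] (N : Submodule R M) :
    Module.Flat R N :=
  inferInstance

section RatSubmodule

variable (R H : Type*) [CommRing R] [Ring H] [HopfAlgebra R H]

noncomputable def ratEndoLinear : (H →ₗ[R] R) →ₗ[R] H →ₗ[R] H :=
  LinearMap.llcomp R H (H ⊗[R] R) H (TensorProduct.rid R H).toLinearMap ∘ₗ
    LinearMap.lcomp R (H ⊗[R] R) (Coalgebra.comul : H →ₗ[R] H ⊗[R] H) ∘ₗ LinearMap.lTensorHom H

/-- `Rat(H*)`. -/
noncomputable def ratSubmodule : Submodule R (H →ₗ[R] R) :=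
  (LinearMap.finiteRange R H H).comap (ratEndoLinear R H)

theorem mem_ratSubmodule [IsNoetherianRing R] {f : H →ₗ[R] R} :
    f ∈ ratSubmodule R H ↔ (LinearMap.range (ratEndo R H f)).FG :=
  LinearMap.mem_finiteRange_iff_hasFiniteRange

theorem smul_mem_ratSubmodule_iff [IsNoetherianRing R] {r : R} (hr : IsSMulRegular H r)
    {f : H →ₗ[R] R} : r • f ∈ ratSubmodule R H ↔ f ∈ ratSubmodule R H := by
  refine ⟨fun h => ?_, Submodule.smul_mem _ r⟩
  rw [ratSubmodule, Submodule.mem_comap, LinearMap.mem_finiteRange_iff_hasFiniteRange] at h ⊢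
  rw [map_smul] at h
  exact h.of_smul hr

end RatSubmodule

theorem rat_submodule_flat_saturated_general
    (R H : Type*) [CommRing R] [IsDedekindDomain R]
    [Ring H] [HopfAlgebra R H] [Module.Projective R H] :
    ∃ N : Submodule R (H →ₗ[R] R),
      (N : Set (H →ₗ[R] R)) = {f | (LinearMap.range (ratEndo R H f)).FG} ∧
      Module.Flat R ↥N ∧
      ∀ (r : R) (f : H →ₗ[R] R), r ≠ 0 → r • f ∈ N → f ∈ N := by
  refine ⟨ratSubmodule R H, Set.ext fun f => mem_ratSubmodule R H,
    Submodule.flat_of_isTorsionFree _, fun r f hr => ?_⟩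
  exact (smul_mem_ratSubmodule_iff R H
    (Module.IsTorsionFree.isSMulRegular (IsRegular.of_ne_zero hr))).mp

/-- **Lemma.** Let `R` be a Dedekind domain and `H` an `R`-projective Hopf algebra.
The set `Rat(H*) = {f ∈ H* | Im(T_f) is a finitely generated R-submodule of H}`
is an `R`-submodule of `H*` which is flat over `R` and saturated in `H*`. -/
theorem rat_submodule_flat_saturated
    (R H : Type*) [CommRing R] [IsDomain R] [IsDedekindDomain R]
    [Ring H] [HopfAlgebra R H] [Module.Projective R H] :
    ∃ N : Submodule R (H →ₗ[R] R),
      (N : Set (H →ₗ[R] R)) = {f | (LinearMap.range (ratEndo R H f)).FG} ∧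
      Module.Flat R ↥N ∧
      ∀ (r : R) (f : H →ₗ[R] R), r ≠ 0 → r • f ∈ N → f ∈ N :=
  rat_submodule_flat_saturated_general R H
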